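/- arXiv:2009.14108 — 2 statements merged into one kernel-verified Lean document; each statement's English description precedes it below -/
import Mathlib

section
/- (Higher-order Markov reward redistribution optimality representation.) Assume a delayed-reward MDP P̃ with episodic reward, and let a new SDP P be obtained by a higher-order Markov reward redistribution that ensures P is strictly return-equivalent to P̃. Assume the reward redistribution is optimal, that is, κ(T−t−1,t) = 0 for all 0 ≤ t ≤ T−1. If additionally the condition E_π[Σ_{τ=0}^{T−t−1} R_{t+2+τ} | s_t,a_t] = E_π[Σ_{τ=0}^{T−t−1} R_{t+2+τ} | s_0,a_0,…,s_t,a_t] holds for every state-action prefix, then E_π[R_{t+1} | s_{t−1},a_{t−1},s_t,a_t] = q̃^π(s_t,a_t) − q̃^π(s_{t−1},a_{t−1}) for all 1 ≤ t ≤ T. -/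
namespace RR

/-- A trajectory (episode) of horizon `T`: state-action pairs at times `0, …, T`. -/
abbrev Traj (S A : Type) (T : ℕ) := Fin (T + 1) → S × A

variable {S A : Type} [Fintype S] [Fintype A] [DecidableEq S] [DecidableEq A] {T : ℕ}

/-- State-action pair of a trajectory at (clamped) natural time `t`. -/
def tAt (τ : Traj S A T) (t : ℕ) : S × A :=
  τ ⟨min t T, Nat.lt_succ_of_le (min_le_right t T)⟩

/-- Probability of a trajectory under initial distribution `μ0`, Markov transition
kernel `p` and Markov policy `π`. -/
noncomputable def trajProb (μ0 : S → ℝ) (p : S → A → S → ℝ) (π : S → A → ℝ)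
    (τ : Traj S A T) : ℝ :=
  μ0 (τ 0).1 * π (τ 0).1 (τ 0).2 *
    ∏ t : Fin T, (p (τ t.castSucc).1 (τ t.castSucc).2 (τ t.succ).1 *
      π (τ t.succ).1 (τ t.succ).2)

/-- Expectation of `f` over trajectories. -/
noncomputable def expec (μ0 : S → ℝ) (p : S → A → S → ℝ) (π : S → A → ℝ)
    (f : Traj S A T → ℝ) : ℝ :=
  ∑ τ : Traj S A T, trajProb μ0 p π τ * f τ

open scoped Classical in
/-- Probability of the event `E` over trajectories. -/
noncomputable def probOf (μ0 : S → ℝ) (p : S → A → S → ℝ) (π : S → A → ℝ)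
    (E : Traj S A T → Prop) : ℝ :=
  ∑ τ ∈ Finset.univ.filter E, trajProb μ0 p π τ

open scoped Classical in
/-- Conditional expectation of `f` given the event `E` (junk value `0` if `E` is null). -/
noncomputable def condExp (μ0 : S → ℝ) (p : S → A → S → ℝ) (π : S → A → ℝ)
    (f : Traj S A T → ℝ) (E : Traj S A T → Prop) : ℝ :=
  (∑ τ ∈ Finset.univ.filter E, trajProb μ0 p π τ * f τ) / probOf μ0 p π E

/-- `π` is a Markov policy (probability of action `a` given state `s`). -/
def IsPolicy (π : S → A → ℝ) : Prop :=
  (∀ s a, 0 ≤ π s a) ∧ ∀ s, ∑ a : A, π s a = 1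

/-- `p` is a Markov transition kernel. -/
def IsKernel (p : S → A → S → ℝ) : Prop :=
  (∀ s a s', 0 ≤ p s a s') ∧ ∀ s a, ∑ s' : S, p s a s' = 1

/-- `μ0` is an initial state distribution. -/
def IsInit (μ0 : S → ℝ) : Prop :=
  (∀ s, 0 ≤ μ0 s) ∧ ∑ s : S, μ0 s = 1

/-- The return `G_0` of an episode: `R τ t` is the reward `R_{t+1}` received at time `t`. -/
noncomputable def ret (R : Traj S A T → ℕ → ℝ) (τ : Traj S A T) : ℝ :=
  ∑ t ∈ Finset.range (T + 1), R τ t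

/-- A reward function is causal (an SDP reward): the reward at time `t` depends only on
the history `(s_0,a_0,…,s_t,a_t)`. -/
def Causal (R : Traj S A T → ℕ → ℝ) : Prop :=
  ∀ t ≤ T, ∀ τ τ' : Traj S A T, (∀ u ≤ t, tAt τ u = tAt τ' u) → R τ t = R τ' t

/-- The delayed (episodic) reward: the whole return `Rfin (s_T, a_T)` is given at the
final time step `T`, all other rewards are `0`. -/
noncomputable def delayedR (Rfin : S → A → ℝ) (τ : Traj S A T) (t : ℕ) : ℝ :=
  if t = T then Rfin (tAt τ T).1 (tAt τ T).2 else 0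

/-- The Q-function `q̃^π(s_t, a_t) = E_π[R̃_{T+1} ∣ s_t, a_t]` of the delayed-reward MDP. -/
noncomputable def qtil (T : ℕ) (μ0 : S → ℝ) (p : S → A → S → ℝ) (π : S → A → ℝ)
    (Rfin : S → A → ℝ) (t : ℕ) (s : S) (a : A) : ℝ :=
  condExp μ0 p π (fun τ : Traj S A T => Rfin (tAt τ T).1 (tAt τ T).2)
    (fun τ => tAt τ t = (s, a))

/-- Expected future rewards `κ(m, tm1) = E_π[∑_{j=0}^{m} R_{tm1+1+j+1} ∣ s_{tm1}, a_{tm1}]`,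
i.e. `κ(m, t−1)` of the paper is `kappa μ0 p π R m (t−1)`. -/
noncomputable def kappa (μ0 : S → ℝ) (p : S → A → S → ℝ) (π : S → A → ℝ)
    (R : Traj S A T → ℕ → ℝ) (m tm1 : ℕ) (s : S) (a : A) : ℝ :=
  condExp μ0 p π (fun τ => ∑ j ∈ Finset.range (m + 1), R τ (tm1 + 1 + j))
    (fun τ => tAt τ tm1 = (s, a))

/-- The Q-function of the SDP: `q^π(s_t,a_t) = E_π[∑_{k=0}^{T−t} R_{t+k+1} ∣ s_t, a_t]`. -/
noncomputable def qval (μ0 : S → ℝ) (p : S → A → S → ℝ) (π : S → A → ℝ)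
    (R : Traj S A T → ℕ → ℝ) (t : ℕ) (s : S) (a : A) : ℝ :=
  condExp μ0 p π (fun τ => ∑ j ∈ Finset.range (T - t + 1), R τ (t + j))
    (fun τ => tAt τ t = (s, a))

/-- Expected immediate reward `r(s_t, a_t) = E_π[R_{t+1} ∣ s_t, a_t]`. -/
noncomputable def rexp (μ0 : S → ℝ) (p : S → A → S → ℝ) (π : S → A → ℝ)
    (R : Traj S A T → ℕ → ℝ) (t : ℕ) (s : S) (a : A) : ℝ :=
  condExp μ0 p π (fun τ => R τ t) (fun τ => tAt τ t = (s, a))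

/-- The event that the trajectory starts with the state-action prefix `σ 0, …, σ t`. -/
def prefixEv (σ : ℕ → S × A) (t : ℕ) (τ : Traj S A T) : Prop :=
  ∀ u ≤ t, tAt τ u = σ u


section Aux

open Finset

set_option linter.unusedSectionVars false

variable (μ0 : S → ℝ) (p : S → A → S → ℝ) (π : S → A → ℝ)

open scoped Classical in
/-- Unnormalized conditional expectation (numerator of `condExp`). -/
noncomputable def Ns (f : Traj S A T → ℝ) (E : Traj S A T → Prop) : ℝ :=
  ∑ τ ∈ Finset.univ.filter E, trajProb μ0 p π τ * f τ

lemma condExp_eq_Ns_div (f : Traj S A T → ℝ) (E : Traj S A T → Prop) :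
    condExp μ0 p π f E = Ns μ0 p π f E / probOf μ0 p π E := rfl

lemma trajProb_nonneg (hμ0 : IsInit μ0) (hp : IsKernel p) (hπ : IsPolicy π)
    (τ : Traj S A T) : 0 ≤ trajProb μ0 p π τ :=
  mul_nonneg (mul_nonneg (hμ0.1 _) (hπ.1 _ _))
    (Finset.prod_nonneg fun _ _ => mul_nonneg (hp.1 _ _ _) (hπ.1 _ _))

lemma probOf_nonneg (hμ0 : IsInit μ0) (hp : IsKernel p) (hπ : IsPolicy π)
    (E : Traj S A T → Prop) : 0 ≤ probOf μ0 p π E := by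
  unfold probOf
  exact Finset.sum_nonneg fun τ _ => trajProb_nonneg μ0 p π hμ0 hp hπ τ

/-- Instance-agnostic congruence of sums over equal finsets. -/
lemma sum_sets_congr {α : Type*} {s t : Finset α} (f : α → ℝ)
    (h : ∀ x, x ∈ s ↔ x ∈ t) : ∑ x ∈ s, f x = ∑ x ∈ t, f x :=
  Finset.sum_congr (Finset.ext h) (fun _ _ => rfl)

open scoped Classical in
lemma Ns_congr {f g : Traj S A T → ℝ} {E : Traj S A T → Prop}
    (h : ∀ τ, E τ → f τ = g τ) : Ns μ0 p π f E = Ns μ0 p π g E := by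
  unfold Ns
  exact Finset.sum_congr rfl fun τ hτ => by
    rw [h τ (Finset.mem_filter.mp hτ).2]

lemma Ns_sub (f g : Traj S A T → ℝ) (E : Traj S A T → Prop) :
    Ns μ0 p π (fun τ => f τ - g τ) E = Ns μ0 p π f E - Ns μ0 p π g E := by
  unfold Ns
  rw [← Finset.sum_sub_distrib]
  exact Finset.sum_congr rfl fun τ _ => mul_sub _ _ _

lemma Ns_add (f g : Traj S A T → ℝ) (E : Traj S A T → Prop) :
    Ns μ0 p π (fun τ => f τ + g τ) E = Ns μ0 p π f E + Ns μ0 p π g E := by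
  unfold Ns
  rw [← Finset.sum_add_distrib]
  exact Finset.sum_congr rfl fun τ _ => mul_add _ _ _

lemma tAt_le {τ : Traj S A T} {u : ℕ} (hu : u ≤ T) :
    tAt τ u = τ ⟨u, Nat.lt_succ_of_le hu⟩ := by
  unfold tAt
  congr 1
  exact Fin.ext (Nat.min_eq_left hu)

/-- Glue two trajectories at time `k`: coordinates `≤ k` from `τ`, the rest from `σ`. -/
def mergeAt (k : ℕ) (τ σ : Traj S A T) : Traj S A T :=
  fun i => if (i : ℕ) ≤ k then τ i else σ i

/-- One transition factor of the trajectory probability. -/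
def stepTerm (τ : Traj S A T) (i : Fin T) : ℝ :=
  p (τ i.castSucc).1 (τ i.castSucc).2 (τ i.succ).1 * π (τ i.succ).1 (τ i.succ).2

lemma trajProb_eq (τ : Traj S A T) :
    trajProb μ0 p π τ =
      μ0 (τ 0).1 * π (τ 0).1 (τ 0).2 * ∏ i : Fin T, stepTerm p π τ i := rfl

lemma prod_stepTerm_mergeAt (k : ℕ) (τ σ : Traj S A T)
    (h : ∀ i : Fin (T + 1), (i : ℕ) = k → τ i = σ i) :
    ∏ i : Fin T, stepTerm p π (mergeAt k τ σ) i =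
      (∏ i ∈ univ.filter (fun i : Fin T => (i : ℕ) + 1 ≤ k), stepTerm p π τ i) *
      ∏ i ∈ univ.filter (fun i : Fin T => ¬((i : ℕ) + 1 ≤ k)), stepTerm p π σ i := by
  have hc : ∀ x : Fin (T + 1), (x : ℕ) ≤ k → mergeAt k τ σ x = τ x :=
    fun x hx => if_pos hx
  have hc' : ∀ x : Fin (T + 1), ¬((x : ℕ) ≤ k) → mergeAt k τ σ x = σ x :=
    fun x hx => if_neg hx
  rw [← Finset.prod_filter_mul_prod_filter_not univ (fun i : Fin T => (i : ℕ) + 1 ≤ k)]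
  congr 1
  · refine Finset.prod_congr rfl fun i hi => ?_
    have hik : (i : ℕ) + 1 ≤ k := (Finset.mem_filter.mp hi).2
    unfold stepTerm
    rw [hc i.castSucc (by rw [Fin.coe_castSucc]; omega),
        hc i.succ (by rw [Fin.val_succ]; omega)]
  · refine Finset.prod_congr rfl fun i hi => ?_
    have hik : ¬((i : ℕ) + 1 ≤ k) := (Finset.mem_filter.mp hi).2
    have hsucc : mergeAt k τ σ i.succ = σ i.succ :=
      hc' _ (by rw [Fin.val_succ]; omega)
    have hcast : mergeAt k τ σ i.castSucc = σ i.castSucc := by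
      by_cases hik2 : (i.castSucc : ℕ) ≤ k
      · rw [hc _ hik2]
        exact h i.castSucc (by rw [Fin.coe_castSucc] at hik2 ⊢; omega)
      · exact hc' _ hik2
    unfold stepTerm
    rw [hsucc, hcast]

lemma trajProb_mergeAt_mul (k : ℕ) (τ σ : Traj S A T)
    (h : ∀ i : Fin (T + 1), (i : ℕ) = k → τ i = σ i) :
    trajProb μ0 p π (mergeAt k τ σ) * trajProb μ0 p π (mergeAt k σ τ) =
      trajProb μ0 p π τ * trajProb μ0 p π σ := by
  have h' : ∀ i : Fin (T + 1), (i : ℕ) = k → σ i = τ i := fun i hi => (h i hi).symm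
  have h0 : mergeAt k τ σ 0 = τ 0 := if_pos (Nat.zero_le k)
  have h0' : mergeAt k σ τ 0 = σ 0 := if_pos (Nat.zero_le k)
  rw [trajProb_eq, trajProb_eq, trajProb_eq μ0 p π τ, trajProb_eq μ0 p π σ,
      prod_stepTerm_mergeAt p π k τ σ h, prod_stepTerm_mergeAt p π k σ τ h',
      ← Finset.prod_filter_mul_prod_filter_not univ (fun i : Fin T => (i : ℕ) + 1 ≤ k)
        (stepTerm p π τ),
      ← Finset.prod_filter_mul_prod_filter_not univ (fun i : Fin T => (i : ℕ) + 1 ≤ k)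
        (stepTerm p π σ), h0, h0']
  ring

open scoped Classical in
/-- Markov factorization: conditionally on the state-action at time `k`, a
past-measurable factor and a future-measurable factor decorrelate. -/
lemma factor (k : ℕ) (hk : k ≤ T) (z : S × A) (u v : Traj S A T → ℝ)
    (hu : ∀ τ τ' : Traj S A T, (∀ i : Fin (T + 1), (i : ℕ) ≤ k → τ i = τ' i) → u τ = u τ')
    (hv : ∀ τ τ' : Traj S A T, (∀ i : Fin (T + 1), k ≤ (i : ℕ) → τ i = τ' i) → v τ = v τ') :
    Ns μ0 p π (fun τ => u τ * v τ) (fun τ : Traj S A T => tAt τ k = z) *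
        probOf μ0 p π (fun τ : Traj S A T => tAt τ k = z) =
      Ns μ0 p π u (fun τ : Traj S A T => tAt τ k = z) *
        Ns μ0 p π v (fun τ : Traj S A T => tAt τ k = z) := by
  unfold Ns probOf
  rw [Finset.sum_mul_sum, Finset.sum_mul_sum]
  rw [← Finset.sum_product' (f := fun τ σ : Traj S A T =>
        trajProb μ0 p π τ * (u τ * v τ) * trajProb μ0 p π σ),
      ← Finset.sum_product' (f := fun τ σ : Traj S A T =>
        trajProb μ0 p π τ * u τ * (trajProb μ0 p π σ * v σ))]
  have coordK : ∀ τ : Traj S A T, tAt τ k = z →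
      ∀ i : Fin (T + 1), (i : ℕ) = k → τ i = z := by
    intro τ hτ i hi
    have hi2 : i = ⟨min k T, Nat.lt_succ_of_le (min_le_right k T)⟩ :=
      Fin.ext (by simp [hi, Nat.min_eq_left hk])
    rw [hi2]
    exact hτ
  refine Finset.sum_nbij' (fun q => (mergeAt k q.1 q.2, mergeAt k q.2 q.1))
    (fun q => (mergeAt k q.1 q.2, mergeAt k q.2 q.1)) ?_ ?_ ?_ ?_ ?_
  · rintro ⟨τ, σ⟩ hq
    simp only [Finset.mem_product, Finset.mem_filter, Finset.mem_univ, true_and] at hq ⊢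
    have h1 : tAt (mergeAt k τ σ) k = tAt τ k := by
      unfold tAt mergeAt
      rw [if_pos (min_le_left k T)]
    have h2 : tAt (mergeAt k σ τ) k = tAt σ k := by
      unfold tAt mergeAt
      rw [if_pos (min_le_left k T)]
    exact ⟨h1.trans hq.1, h2.trans hq.2⟩
  · rintro ⟨τ, σ⟩ hq
    simp only [Finset.mem_product, Finset.mem_filter, Finset.mem_univ, true_and] at hq ⊢
    have h1 : tAt (mergeAt k τ σ) k = tAt τ k := by
      unfold tAt mergeAt
      rw [if_pos (min_le_left k T)]
    have h2 : tAt (mergeAt k σ τ) k = tAt σ k := by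
      unfold tAt mergeAt
      rw [if_pos (min_le_left k T)]
    exact ⟨h1.trans hq.1, h2.trans hq.2⟩
  · rintro ⟨τ, σ⟩ _
    refine Prod.ext ?_ ?_ <;> funext i <;>
      by_cases hik : (i : ℕ) ≤ k <;> simp [mergeAt, hik]
  · rintro ⟨τ, σ⟩ _
    refine Prod.ext ?_ ?_ <;> funext i <;>
      by_cases hik : (i : ℕ) ≤ k <;> simp [mergeAt, hik]
  · rintro ⟨τ, σ⟩ hq
    simp only [Finset.mem_product, Finset.mem_filter, Finset.mem_univ, true_and] at hq
    have hτ := hq.1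
    have hσ := hq.2
    have hcoord : ∀ i : Fin (T + 1), (i : ℕ) = k → τ i = σ i :=
      fun i hi => (coordK τ hτ i hi).trans (coordK σ hσ i hi).symm
    have hcoord' : ∀ i : Fin (T + 1), (i : ℕ) = k → σ i = τ i :=
      fun i hi => (hcoord i hi).symm
    have hu1 : u (mergeAt k τ σ) = u τ :=
      hu _ _ (fun i hi => if_pos hi)
    have hv2 : v (mergeAt k σ τ) = v τ := by
      refine hv _ _ (fun i hi => ?_)
      by_cases h2 : (i : ℕ) ≤ k
      · have he : (i : ℕ) = k := le_antisymm h2 hi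
        rw [show mergeAt k σ τ i = σ i from if_pos h2]
        exact hcoord' i he
      · exact if_neg h2
    have hmul := trajProb_mergeAt_mul μ0 p π k τ σ hcoord
    simp only
    rw [hu1, hv2]
    linear_combination (u τ * v τ) * hmul.symm

open scoped Classical in
/-- Clamp a trajectory at time `t` (repeat coordinate `t` afterwards). -/
def clip (t : ℕ) (τ : Traj S A T) : Traj S A T :=
  fun i => τ ⟨min (i : ℕ) t, lt_of_le_of_lt (min_le_left _ _) i.isLt⟩

open scoped Classical in
/-- On any event measurable w.r.t. the prefix up to time `t`, the expected future
redistributed reward vanishes (optimality of the redistribution + `hcond`). -/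
lemma Ns_tail_zero (hμ0 : IsInit μ0) (hp : IsKernel p) (hπ : IsPolicy π)
    (R : Traj S A T → ℕ → ℝ)
    (hopt : ∀ t : ℕ, t ≤ T - 1 → ∀ (s : S) (a : A),
      kappa μ0 p π R (T - t - 1) t s a = 0)
    (hcond : ∀ t : ℕ, t ≤ T → ∀ σ : ℕ → S × A,
      probOf μ0 p π (prefixEv (T := T) σ t) ≠ 0 →
      condExp μ0 p π (fun τ => ∑ j ∈ Finset.range (T - t), R τ (t + 1 + j))
          (fun τ : Traj S A T => tAt τ t = σ t) =
        condExp μ0 p π (fun τ => ∑ j ∈ Finset.range (T - t), R τ (t + 1 + j))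
          (prefixEv (T := T) σ t))
    (t : ℕ) (ht : t ≤ T) (E : Traj S A T → Prop)
    (hE : ∀ τ τ' : Traj S A T, (∀ u, u ≤ t → tAt τ u = tAt τ' u) → E τ → E τ') :
    Ns μ0 p π (fun τ => ∑ j ∈ Finset.range (T - t), R τ (t + 1 + j)) E = 0 := by
  rcases eq_or_lt_of_le ht with rfl | htT
  · simp [Ns]
  -- key: the statement for an exact prefix event
  have key : ∀ σ : ℕ → S × A,
      Ns μ0 p π (fun τ => ∑ j ∈ Finset.range (T - t), R τ (t + 1 + j))
        (prefixEv (T := T) σ t) = 0 := by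
    intro σ
    by_cases hz : probOf μ0 p π (prefixEv (T := T) σ t) = 0
    · unfold Ns
      refine Finset.sum_eq_zero fun τ hτ => ?_
      have h0 : trajProb μ0 p π τ = 0 := by
        have hnn : ∀ τ' ∈ Finset.univ.filter (prefixEv (T := T) σ t),
            0 ≤ trajProb μ0 p π τ' :=
          fun τ' _ => trajProb_nonneg μ0 p π hμ0 hp hπ τ'
        exact (Finset.sum_eq_zero_iff_of_nonneg hnn).mp hz τ hτ
      rw [h0, zero_mul]
    · have h2 := hopt t (by omega) (σ t).1 (σ t).2
      have h3 : condExp μ0 p π (fun τ => ∑ j ∈ Finset.range (T - t), R τ (t + 1 + j))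
          (fun τ : Traj S A T => tAt τ t = σ t) = 0 := by
        rw [show T - t = T - t - 1 + 1 from by omega]
        exact h2
      rw [hcond t ht σ hz] at h3
      rw [condExp_eq_Ns_div] at h3
      rcases div_eq_zero_iff.mp h3 with h5 | h5
      · exact h5
      · exact absurd h5 hz
  unfold Ns
  rw [← Finset.sum_fiberwise (Finset.univ.filter E) (clip t)
      (fun τ => trajProb μ0 p π τ * ∑ j ∈ Finset.range (T - t), R τ (t + 1 + j))]
  refine Finset.sum_eq_zero fun ρ _ => ?_
  -- facts about clip and tAt
  have hclip_at : ∀ (τ : Traj S A T), clip t τ = ρ → ∀ u, u ≤ t → tAt τ u = tAt ρ u := by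
    intro τ hc u hu
    have h1 : tAt τ u = τ ⟨u, by omega⟩ := tAt_le (by omega)
    have h2 : tAt ρ u = ρ ⟨u, by omega⟩ := tAt_le (by omega)
    rw [h1, h2, ← hc]
    show τ _ = τ ⟨min u t, _⟩
    congr 1
    exact Fin.ext (by simp [Nat.min_eq_left hu])
  by_cases hne : ∃ τ0 : Traj S A T, E τ0 ∧ clip t τ0 = ρ
  · obtain ⟨τ0, hEτ0, hgτ0⟩ := hne
    have hiff : ∀ τ : Traj S A T,
        (E τ ∧ clip t τ = ρ) ↔ prefixEv (T := T) (fun u => tAt ρ u) t τ := by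
      intro τ
      constructor
      · rintro ⟨_, hc⟩ u hu
        exact hclip_at τ hc u hu
      · intro hpre
        have hτ0pre : ∀ u, u ≤ t → tAt τ0 u = tAt ρ u :=
          fun u hu => hclip_at τ0 hgτ0 u hu
        constructor
        · exact hE τ0 τ (fun u hu => (hτ0pre u hu).trans (hpre u hu).symm) hEτ0
        · funext i
          have hmin : min (i : ℕ) t ≤ t := min_le_right _ _
          have h1 : clip t τ i = τ ⟨min (i : ℕ) t, by omega⟩ := rfl
          have h2 : tAt τ (min (i : ℕ) t) = τ ⟨min (i : ℕ) t, by omega⟩ :=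
            tAt_le (by omega)
          have h3 : tAt τ0 (min (i : ℕ) t) = τ0 ⟨min (i : ℕ) t, by omega⟩ :=
            tAt_le (by omega)
          have h4 : ρ i = τ0 ⟨min (i : ℕ) t, by omega⟩ := by
            rw [← hgτ0]; rfl
          have hstep : tAt τ (min (i : ℕ) t) = tAt τ0 (min (i : ℕ) t) :=
            (hpre _ hmin).trans (hτ0pre _ hmin).symm
          rw [h1, ← h2, hstep, h3, ← h4]
    have hmem : ∀ τ : Traj S A T,
        τ ∈ (Finset.univ.filter E).filter (fun τ => clip t τ = ρ) ↔
          τ ∈ Finset.univ.filter (prefixEv (T := T) (fun u => tAt ρ u) t) := by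
      intro τ
      simp only [Finset.mem_filter, Finset.mem_univ, true_and, and_assoc]
      exact hiff τ
    rw [sum_sets_congr _ hmem]
    have := key (fun u => tAt ρ u)
    unfold Ns at this
    exact this
  · have hempty : (Finset.univ.filter E).filter (fun τ => clip t τ = ρ) = ∅ := by
      refine Finset.filter_eq_empty_iff.mpr fun τ hτ hc => ?_
      exact hne ⟨τ, (Finset.mem_filter.mp hτ).2, hc⟩
    rw [hempty, Finset.sum_empty]

end Aux

/-- Higher-order Markov reward redistribution optimality representation:
for a strictly return-equivalent optimal redistribution whose expected future
redistributed reward given the full prefix only depends on `(s_t, a_t)`, the expected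
redistributed reward is the difference of Q-values of the delayed-reward MDP. -/
theorem stmt4_optimality_representation
    (S A : Type) [Fintype S] [Fintype A] [DecidableEq S] [DecidableEq A]
    (T : ℕ) (μ0 : S → ℝ) (p : S → A → S → ℝ)
    (hμ0 : IsInit μ0) (hp : IsKernel p)
    (Rfin : S → A → ℝ) (R : Traj S A T → ℕ → ℝ)
    (hcausal : Causal R)
    (hsre : ∀ τ : Traj S A T, ret (delayedR (T := T) Rfin) τ = ret R τ)
    (π : S → A → ℝ) (hπ : IsPolicy π)
    (hopt : ∀ t : ℕ, t ≤ T - 1 → ∀ (s : S) (a : A),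
      kappa μ0 p π R (T - t - 1) t s a = 0)
    (hcond : ∀ t : ℕ, t ≤ T → ∀ σ : ℕ → S × A,
      probOf μ0 p π (prefixEv (T := T) σ t) ≠ 0 →
      condExp μ0 p π (fun τ => ∑ j ∈ Finset.range (T - t), R τ (t + 1 + j))
          (fun τ : Traj S A T => tAt τ t = σ t) =
        condExp μ0 p π (fun τ => ∑ j ∈ Finset.range (T - t), R τ (t + 1 + j))
          (prefixEv (T := T) σ t)) :
    ∀ t : ℕ, 1 ≤ t → t ≤ T → ∀ (s : S) (a : A) (s' : S) (a' : A),
      probOf μ0 p π (fun τ : Traj S A T =>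
          tAt τ (t - 1) = (s, a) ∧ tAt τ t = (s', a')) ≠ 0 →
      condExp μ0 p π (fun τ => R τ t)
          (fun τ : Traj S A T => tAt τ (t - 1) = (s, a) ∧ tAt τ t = (s', a')) =
        qtil T μ0 p π Rfin t s' a' - qtil T μ0 p π Rfin (t - 1) s a := by
  classical
  intro t ht1 htT s a s' a' hP
  have hnn : ∀ τ : Traj S A T, 0 ≤ trajProb μ0 p π τ :=
    trajProb_nonneg μ0 p π hμ0 hp hπ
  -- positivity of the conditioning events
  have hPnn : 0 ≤ probOf μ0 p π (fun τ : Traj S A T =>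
      tAt τ (t - 1) = (s, a) ∧ tAt τ t = (s', a')) :=
    probOf_nonneg μ0 p π hμ0 hp hπ _
  have hPpos : 0 < probOf μ0 p π (fun τ : Traj S A T =>
      tAt τ (t - 1) = (s, a) ∧ tAt τ t = (s', a')) :=
    lt_of_le_of_ne hPnn (Ne.symm hP)
  have hsub1 : probOf μ0 p π (fun τ : Traj S A T =>
        tAt τ (t - 1) = (s, a) ∧ tAt τ t = (s', a')) ≤
      probOf μ0 p π (fun τ : Traj S A T => tAt τ t = (s', a')) := by
    unfold probOf
    refine Finset.sum_le_sum_of_subset_of_nonneg ?_ (fun τ _ _ => hnn τ)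
    intro τ hτ
    simp only [Finset.mem_filter, Finset.mem_univ, true_and] at hτ ⊢
    exact hτ.2
  have hsub2 : probOf μ0 p π (fun τ : Traj S A T =>
        tAt τ (t - 1) = (s, a) ∧ tAt τ t = (s', a')) ≤
      probOf μ0 p π (fun τ : Traj S A T => tAt τ (t - 1) = (s, a)) := by
    unfold probOf
    refine Finset.sum_le_sum_of_subset_of_nonneg ?_ (fun τ _ _ => hnn τ)
    intro τ hτ
    simp only [Finset.mem_filter, Finset.mem_univ, true_and] at hτ ⊢
    exact hτ.1
  have hEtne : probOf μ0 p π (fun τ : Traj S A T => tAt τ t = (s', a')) ≠ 0 :=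
    ne_of_gt (lt_of_lt_of_le hPpos hsub1)
  have hEmne : probOf μ0 p π (fun τ : Traj S A T => tAt τ (t - 1) = (s, a)) ≠ 0 :=
    ne_of_gt (lt_of_lt_of_le hPpos hsub2)
  -- return identities
  have hret : ∀ τ : Traj S A T,
      Rfin (tAt τ T).1 (tAt τ T).2 = ∑ u ∈ Finset.range (T + 1), R τ u := by
    intro τ
    have h1 := hsre τ
    unfold ret delayedR at h1
    rw [Finset.sum_ite_eq' (Finset.range (T + 1)) T,
        if_pos (Finset.self_mem_range_succ T)] at h1
    exact h1
  have hsplit : ∀ k : ℕ, k ≤ T → ∀ τ : Traj S A T,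
      (∑ u ∈ Finset.range (T + 1), R τ u) =
        (∑ u ∈ Finset.range (k + 1), R τ u) +
          ∑ j ∈ Finset.range (T - k), R τ (k + 1 + j) := by
    intro k hk τ
    rw [show T + 1 = (k + 1) + (T - k) from by omega, Finset.sum_range_add]
  have hGt : ∀ τ : Traj S A T,
      Rfin (tAt τ T).1 (tAt τ T).2 =
        (∑ u ∈ Finset.range (t + 1), R τ u) +
          ∑ j ∈ Finset.range (T - t), R τ (t + 1 + j) :=
    fun τ => (hret τ).trans (hsplit t htT τ)
  have hGm : ∀ τ : Traj S A T,
      Rfin (tAt τ T).1 (tAt τ T).2 =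
        (∑ u ∈ Finset.range (t - 1 + 1), R τ u) +
          ∑ j ∈ Finset.range (T - (t - 1)), R τ (t - 1 + 1 + j) :=
    fun τ => (hret τ).trans (hsplit (t - 1) (by omega) τ)
  have hRt : ∀ τ : Traj S A T,
      R τ t = (∑ u ∈ Finset.range (t + 1), R τ u) -
        ∑ u ∈ Finset.range (t - 1 + 1), R τ u := by
    intro τ
    rw [show t + 1 = (t - 1 + 1) + 1 from by omega, Finset.sum_range_succ,
        show t - 1 + 1 = t from by omega]
    ring
  -- tail-zero facts
  have TZ1 : Ns μ0 p π (fun τ => ∑ j ∈ Finset.range (T - t), R τ (t + 1 + j))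
      (fun τ : Traj S A T => tAt τ (t - 1) = (s, a) ∧ tAt τ t = (s', a')) = 0 := by
    refine Ns_tail_zero μ0 p π hμ0 hp hπ R hopt hcond t htT _ ?_
    rintro τ τ' hag ⟨h1, h2⟩
    exact ⟨by rw [← hag (t - 1) (by omega)]; exact h1,
      by rw [← hag t le_rfl]; exact h2⟩
  have TZ3 : Ns μ0 p π (fun τ => ∑ j ∈ Finset.range (T - (t - 1)), R τ (t - 1 + 1 + j))
      (fun τ : Traj S A T => tAt τ (t - 1) = (s, a)) = 0 := by
    refine Ns_tail_zero μ0 p π hμ0 hp hπ R hopt hcond (t - 1) (by omega) _ ?_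
    intro τ τ' hag h1
    rw [← hag (t - 1) le_rfl]
    exact h1
  -- measurability facts for the Markov factorization
  have hmeasEm : ∀ τ τ' : Traj S A T,
      (∀ i : Fin (T + 1), (i : ℕ) ≤ t → τ i = τ' i) →
      (if tAt τ (t - 1) = (s, a) then (1 : ℝ) else 0) =
        (if tAt τ' (t - 1) = (s, a) then (1 : ℝ) else 0) := by
    intro τ τ' hag
    have h1 : tAt τ (t - 1) = tAt τ' (t - 1) := by
      rw [tAt_le (show t - 1 ≤ T by omega), tAt_le (show t - 1 ≤ T by omega)]
      exact hag ⟨t - 1, by omega⟩ (show t - 1 ≤ t from Nat.sub_le t 1)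
    rw [h1]
  have hmeasG : ∀ τ τ' : Traj S A T,
      (∀ i : Fin (T + 1), t ≤ (i : ℕ) → τ i = τ' i) →
      Rfin (tAt τ T).1 (tAt τ T).2 = Rfin (tAt τ' T).1 (tAt τ' T).2 := by
    intro τ τ' hag
    have h1 : tAt τ T = tAt τ' T := by
      rw [tAt_le (le_refl T), tAt_le (le_refl T)]
      exact hag ⟨T, by omega⟩ (show t ≤ T from htT)
    rw [h1]
  have hmeasF : ∀ τ τ' : Traj S A T,
      (∀ i : Fin (T + 1), (i : ℕ) ≤ t - 1 → τ i = τ' i) →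
      (∑ u ∈ Finset.range (t - 1 + 1), R τ u) =
        ∑ u ∈ Finset.range (t - 1 + 1), R τ' u := by
    intro τ τ' hag
    refine Finset.sum_congr rfl fun u hu => ?_
    rw [Finset.mem_range] at hu
    refine hcausal u (by omega) τ τ' fun w hw => ?_
    rw [tAt_le (show w ≤ T by omega), tAt_le (show w ≤ T by omega)]
    exact hag ⟨w, by omega⟩ (show w ≤ t - 1 by omega)
  have hmeasEt : ∀ τ τ' : Traj S A T,
      (∀ i : Fin (T + 1), t - 1 ≤ (i : ℕ) → τ i = τ' i) →
      (if tAt τ t = (s', a') then (1 : ℝ) else 0) =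
        (if tAt τ' t = (s', a') then (1 : ℝ) else 0) := by
    intro τ τ' hag
    have h1 : tAt τ t = tAt τ' t := by
      rw [tAt_le htT, tAt_le htT]
      exact hag ⟨t, by omega⟩ (show t - 1 ≤ t from Nat.sub_le t 1)
    rw [h1]
  -- the two factorization identities
  have C1 := factor μ0 p π t htT (s', a')
    (fun τ => if tAt τ (t - 1) = (s, a) then (1 : ℝ) else 0)
    (fun τ => Rfin (tAt τ T).1 (tAt τ T).2) hmeasEm hmeasG
  have C2 := factor μ0 p π (t - 1) (by omega) (s, a)
    (fun τ => ∑ u ∈ Finset.range (t - 1 + 1), R τ u)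
    (fun τ => if tAt τ t = (s', a') then (1 : ℝ) else 0) hmeasF hmeasEt
  beta_reduce at C1 C2
  -- rewrite the indicator sums into conjunction events
  have e1 : Ns μ0 p π
      (fun τ => (if tAt τ (t - 1) = (s, a) then (1 : ℝ) else 0) *
        Rfin (tAt τ T).1 (tAt τ T).2)
      (fun τ : Traj S A T => tAt τ t = (s', a')) =
      Ns μ0 p π (fun τ => Rfin (tAt τ T).1 (tAt τ T).2)
        (fun τ : Traj S A T => tAt τ (t - 1) = (s, a) ∧ tAt τ t = (s', a')) := by
    unfold Ns
    rw [Finset.sum_filter, Finset.sum_filter]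
    refine Finset.sum_congr rfl fun τ _ => ?_
    by_cases h1 : tAt τ (t - 1) = (s, a) <;>
      by_cases h2 : tAt τ t = (s', a') <;> simp [h1, h2]
  have e2 : Ns μ0 p π
      (fun τ => if tAt τ (t - 1) = (s, a) then (1 : ℝ) else 0)
      (fun τ : Traj S A T => tAt τ t = (s', a')) =
      probOf μ0 p π
        (fun τ : Traj S A T => tAt τ (t - 1) = (s, a) ∧ tAt τ t = (s', a')) := by
    unfold Ns probOf
    rw [Finset.sum_filter, Finset.sum_filter]
    refine Finset.sum_congr rfl fun τ _ => ?_
    by_cases h1 : tAt τ (t - 1) = (s, a) <;>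
      by_cases h2 : tAt τ t = (s', a') <;> simp [h1, h2]
  have e3 : Ns μ0 p π
      (fun τ => (∑ u ∈ Finset.range (t - 1 + 1), R τ u) *
        (if tAt τ t = (s', a') then (1 : ℝ) else 0))
      (fun τ : Traj S A T => tAt τ (t - 1) = (s, a)) =
      Ns μ0 p π (fun τ => ∑ u ∈ Finset.range (t - 1 + 1), R τ u)
        (fun τ : Traj S A T => tAt τ (t - 1) = (s, a) ∧ tAt τ t = (s', a')) := by
    unfold Ns
    rw [Finset.sum_filter, Finset.sum_filter]
    refine Finset.sum_congr rfl fun τ _ => ?_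
    by_cases h1 : tAt τ (t - 1) = (s, a) <;>
      by_cases h2 : tAt τ t = (s', a') <;> simp [h1, h2]
  have e4 : Ns μ0 p π
      (fun τ => if tAt τ t = (s', a') then (1 : ℝ) else 0)
      (fun τ : Traj S A T => tAt τ (t - 1) = (s, a)) =
      probOf μ0 p π
        (fun τ : Traj S A T => tAt τ (t - 1) = (s, a) ∧ tAt τ t = (s', a')) := by
    unfold Ns probOf
    rw [Finset.sum_filter, Finset.sum_filter]
    refine Finset.sum_congr rfl fun τ _ => ?_
    by_cases h1 : tAt τ (t - 1) = (s, a) <;>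
      by_cases h2 : tAt τ t = (s', a') <;> simp [h1, h2]
  rw [e1, e2] at C1
  rw [e3, e4] at C2
  -- numerator identities
  have n1 : Ns μ0 p π (fun τ => R τ t)
      (fun τ : Traj S A T => tAt τ (t - 1) = (s, a) ∧ tAt τ t = (s', a')) =
      Ns μ0 p π (fun τ => Rfin (tAt τ T).1 (tAt τ T).2)
        (fun τ : Traj S A T => tAt τ (t - 1) = (s, a) ∧ tAt τ t = (s', a')) -
      Ns μ0 p π (fun τ => ∑ u ∈ Finset.range (t - 1 + 1), R τ u)
        (fun τ : Traj S A T => tAt τ (t - 1) = (s, a) ∧ tAt τ t = (s', a')) := by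
    have step : Ns μ0 p π (fun τ => R τ t)
        (fun τ : Traj S A T => tAt τ (t - 1) = (s, a) ∧ tAt τ t = (s', a')) =
        Ns μ0 p π (fun τ =>
          (Rfin (tAt τ T).1 (tAt τ T).2 -
            ∑ j ∈ Finset.range (T - t), R τ (t + 1 + j)) -
          ∑ u ∈ Finset.range (t - 1 + 1), R τ u)
        (fun τ : Traj S A T => tAt τ (t - 1) = (s, a) ∧ tAt τ t = (s', a')) := by
      refine Ns_congr μ0 p π fun τ _ => ?_
      have h1 := hGt τ
      have h2 := hRt τ
      linarith
    rw [step, Ns_sub, Ns_sub, TZ1]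
    ring
  have n2 : Ns μ0 p π (fun τ => Rfin (tAt τ T).1 (tAt τ T).2)
      (fun τ : Traj S A T => tAt τ (t - 1) = (s, a)) =
      Ns μ0 p π (fun τ => ∑ u ∈ Finset.range (t - 1 + 1), R τ u)
        (fun τ : Traj S A T => tAt τ (t - 1) = (s, a)) := by
    have step : Ns μ0 p π (fun τ => Rfin (tAt τ T).1 (tAt τ T).2)
        (fun τ : Traj S A T => tAt τ (t - 1) = (s, a)) =
        Ns μ0 p π (fun τ =>
          (∑ u ∈ Finset.range (t - 1 + 1), R τ u) +
            ∑ j ∈ Finset.range (T - (t - 1)), R τ (t - 1 + 1 + j))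
        (fun τ : Traj S A T => tAt τ (t - 1) = (s, a)) :=
      Ns_congr μ0 p π fun τ _ => hGm τ
    rw [step, Ns_add, TZ3, add_zero]
  -- final assembly
  unfold qtil
  rw [condExp_eq_Ns_div, condExp_eq_Ns_div, condExp_eq_Ns_div]
  have key1 : Ns μ0 p π (fun τ => Rfin (tAt τ T).1 (tAt τ T).2)
      (fun τ : Traj S A T => tAt τ (t - 1) = (s, a) ∧ tAt τ t = (s', a')) /
        probOf μ0 p π
          (fun τ : Traj S A T => tAt τ (t - 1) = (s, a) ∧ tAt τ t = (s', a')) =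
      Ns μ0 p π (fun τ => Rfin (tAt τ T).1 (tAt τ T).2)
        (fun τ : Traj S A T => tAt τ t = (s', a')) /
        probOf μ0 p π (fun τ : Traj S A T => tAt τ t = (s', a')) := by
    rw [div_eq_div_iff hP hEtne]
    linarith [C1]
  have key2 : Ns μ0 p π (fun τ => ∑ u ∈ Finset.range (t - 1 + 1), R τ u)
      (fun τ : Traj S A T => tAt τ (t - 1) = (s, a) ∧ tAt τ t = (s', a')) /
        probOf μ0 p π
          (fun τ : Traj S A T => tAt τ (t - 1) = (s, a) ∧ tAt τ t = (s', a')) =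
      Ns μ0 p π (fun τ => ∑ u ∈ Finset.range (t - 1 + 1), R τ u)
        (fun τ : Traj S A T => tAt τ (t - 1) = (s, a)) /
        probOf μ0 p π (fun τ : Traj S A T => tAt τ (t - 1) = (s, a)) := by
    rw [div_eq_div_iff hP hEmne]
    linarith [C2]
  rw [n1, sub_div, key1, key2, n2]

end RR
end

section
/- If the reward redistribution transforming a delayed-reward MDP P̃ into a return-equivalent SDP P is optimal, then for every policy π the Q-values of P satisfy q^π(s_t,a_t) = r(s_t,a_t), where r(s_t,a_t) = E_π[R_{t+1} | s_t,a_t] is the expected immediate redistributed reward. -/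
namespace RR

variable {S A : Type} [Fintype S] [Fintype A] [DecidableEq S] [DecidableEq A] {T : ℕ}

/-- For an optimal reward redistribution, the Q-values of the SDP `P`
equal the expected immediate redistributed reward: `q^π(s_t,a_t) = r(s_t,a_t)`. -/
theorem stmt5_q_equals_r
    (S A : Type) [Fintype S] [Fintype A] [DecidableEq S] [DecidableEq A]
    (T : ℕ) (μ0 : S → ℝ) (p : S → A → S → ℝ)
    (hμ0 : IsInit μ0) (hp : IsKernel p)
    (Rfin : S → A → ℝ) (R : Traj S A T → ℕ → ℝ)
    (hcausal : Causal R)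
    (hre : ∀ π' : S → A → ℝ, IsPolicy π' →
      expec μ0 p π' (ret (delayedR (T := T) Rfin)) = expec μ0 p π' (ret R))
    (hopt : ∀ π' : S → A → ℝ, IsPolicy π' → ∀ t : ℕ, t ≤ T - 1 → ∀ (s : S) (a : A),
      kappa μ0 p π' R (T - t - 1) t s a = 0) :
    ∀ π : S → A → ℝ, IsPolicy π → ∀ t : ℕ, t ≤ T → ∀ (s : S) (a : A),
      qval μ0 p π R t s a = rexp μ0 p π R t s a := by
  classical
  intro π hπ t ht s a
  rcases eq_or_lt_of_le ht with rfl | hlt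
  · simp [qval, rexp, Nat.sub_self]
  · have hk := hopt π hπ t (by omega) s a
    unfold kappa at hk
    unfold qval rexp
    have hsum : ∀ τ : Traj S A T,
        ∑ j ∈ Finset.range (T - t + 1), R τ (t + j)
          = (∑ j ∈ Finset.range (T - t - 1 + 1), R τ (t + 1 + j)) + R τ t := by
      intro τ
      have h1 : T - t = T - t - 1 + 1 := by omega
      rw [show T - t + 1 = (T - t) + 1 from rfl, Finset.sum_range_succ', h1]
      congr 1
      exact Finset.sum_congr rfl fun j _ => by ring_nf
    unfold condExp at *
    simp only [hsum, mul_add, Finset.sum_add_distrib, add_div]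
    rw [hk, zero_add]

end RR
end
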